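/- Let B_X be the unit ball of a complex Banach space X, F : B_X → closure(D^n) holomorphic with F(z) = a + Σ_{s≥1} P_s(z) and |a_j| = ‖a‖_∞ for all j. Then for ‖z‖ = r ≤ R, where R ∈ (0,1) is the root of 3(1-r)log(1/(1-r)) = 2r: Σ_{n≥0} ‖a‖_∞ r^n/(n+1) + Σ_{n≥1} (1/(n+1)) Σ_{k=1}^n r^{k-1} ‖P_{n-k+1}(z)‖_∞ ≤ (1/r) log(1/(1-r)). -/

import Mathlib

/-!
Fix `z` with `‖z‖ = r`. Each coordinate slice `c ↦ F (c • z) j` is a holomorphic map of the disc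
`‖c‖ < 1 / r` into the closed unit disc, with Taylor coefficients `a j` and `P s z j`. Wiener's
inequality `‖b s‖ ≤ 1 - ‖b 0‖ ^ 2` (Schwarz–Pick at the centre, applied to the average of the
function over the `s`-th roots of unity) gives `‖P s z‖ ≤ (1 - ‖a‖ ^ 2) * r ^ s`. Summing the
logarithmic series bounds the left-hand side by `A L / r + (1 - A²) (r / (1 - r) - L / r + 1)`,
where `A = ‖a‖` and `L = log (1 / (1 - r))`, and this is at most `L / r` once
`2 r ≤ 3 (1 - r) L`. That inequality holds for `r ≤ R` because
`(1 - r) L / r = 1 - ∑ r ^ (m + 1) / ((m + 1) (m + 2))` decreases in `r`.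
-/

open Metric Finset ComplexConjugate

noncomputable def discMobius (b w : ℂ) : ℂ := (w - b) / (1 - conj b * w)

theorem norm_sub_le_norm_one_sub_conj_mul {b w : ℂ} (hb : ‖b‖ ≤ 1) (hw : ‖w‖ ≤ 1) :
    ‖w - b‖ ≤ ‖1 - conj b * w‖ := by
  have hid : Complex.normSq (1 - conj b * w) - Complex.normSq (w - b)
      = (1 - Complex.normSq b) * (1 - Complex.normSq w) := by
    simp only [Complex.normSq_apply, Complex.sub_re, Complex.sub_im, Complex.mul_re,
      Complex.mul_im, Complex.one_re, Complex.one_im, Complex.conj_re, Complex.conj_im]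
    ring
  rw [← pow_le_pow_iff_left₀ (norm_nonneg _) (norm_nonneg _) two_ne_zero, Complex.sq_norm,
    Complex.sq_norm]
  rw [← Complex.sq_norm b, ← Complex.sq_norm w] at hid
  nlinarith [mul_nonneg (sub_nonneg.2 (pow_le_one₀ (norm_nonneg b) hb (n := 2)))
    (sub_nonneg.2 (pow_le_one₀ (norm_nonneg w) hw (n := 2)))]

theorem one_sub_conj_mul_ne_zero {b w : ℂ} (hb : ‖b‖ < 1) (hw : ‖w‖ ≤ 1) :
    1 - conj b * w ≠ 0 := by
  refine sub_ne_zero.2 fun h => ?_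
  have : ‖conj b * w‖ < 1 := by
    rw [norm_mul, Complex.norm_conj]
    exact mul_lt_one_of_nonneg_of_lt_one_left (norm_nonneg b) hb hw
  simp [← h] at this

theorem norm_discMobius_le_one {b w : ℂ} (hb : ‖b‖ < 1) (hw : ‖w‖ ≤ 1) :
    ‖discMobius b w‖ ≤ 1 := by
  rw [discMobius, norm_div, div_le_one (norm_pos_iff.2 (one_sub_conj_mul_ne_zero hb hw))]
  exact norm_sub_le_norm_one_sub_conj_mul hb.le hw

theorem hasDerivAt_discMobius_self {b : ℂ} (hb : ‖b‖ < 1) :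
    HasDerivAt (discMobius b) (1 - conj b * b)⁻¹ b := by
  have hne := one_sub_conj_mul_ne_zero hb hb.le
  have h := ((hasDerivAt_id' b).sub_const b).div
    (((hasDerivAt_id' b).const_mul (conj b)).const_sub 1) hne
  rwa [sub_self, zero_mul, sub_zero, one_mul, sq, ← div_div, div_self hne, one_div] at h

theorem deriv_eq_zero_of_norm_eq_one {f : ℂ → ℂ} {c : ℂ} {ρ : ℝ}
    (hd : DifferentiableOn ℂ f (ball c ρ)) (hmaps : Set.MapsTo f (ball c ρ) (closedBall 0 1))
    (hρ : 0 < ρ) (hc : ‖f c‖ = 1) : deriv f c = 0 := by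
  have hmax : IsLocalMax (norm ∘ f) c := by
    filter_upwards [ball_mem_nhds c hρ] with w hw
    simpa [hc] using hmaps hw
  have hconst : f =ᶠ[nhds c] fun _ => f c := Complex.eventually_eq_of_isLocalMax_norm
    (Filter.eventually_of_mem (ball_mem_nhds c hρ) fun w hw =>
      hd.differentiableAt (isOpen_ball.mem_nhds hw)) hmax
  rw [hconst.deriv_eq, deriv_const]

theorem norm_deriv_mul_le_one_sub_sq {f : ℂ → ℂ} {c : ℂ} {ρ : ℝ}
    (hd : DifferentiableOn ℂ f (ball c ρ)) (hmaps : Set.MapsTo f (ball c ρ) (closedBall 0 1))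
    (hρ : 0 < ρ) : ‖deriv f c‖ * ρ ≤ 1 - ‖f c‖ ^ 2 := by
  have hfc : ‖f c‖ ≤ 1 := by simpa using hmaps (mem_ball_self hρ)
  rcases hfc.eq_or_lt with hb | hb
  · simp [deriv_eq_zero_of_norm_eq_one hd hmaps hρ hb, hb]
  set b := f c
  have hH : DifferentiableOn ℂ (discMobius b ∘ f) (ball c ρ) :=
    (hd.sub_const b).div ((differentiableOn_const 1).sub (hd.const_mul _))
      fun w hw => one_sub_conj_mul_ne_zero hb (by simpa using hmaps hw)
  have hHmaps : Set.MapsTo (discMobius b ∘ f) (ball c ρ) (closedBall 0 1) :=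
    fun w hw => by simpa using norm_discMobius_le_one hb (by simpa using hmaps hw)
  have hH0 : (discMobius b ∘ f) c = 0 := by simp [discMobius, b]
  have hschwarz := Complex.norm_deriv_le_div_of_mapsTo_ball hH (hH0 ▸ hHmaps) hρ
  have hchain := (hasDerivAt_discMobius_self hb).comp c
    (hd.differentiableAt (ball_mem_nhds c hρ)).hasDerivAt
  have hnorm : ‖(1 - conj b * b)⁻¹‖ = (1 - ‖b‖ ^ 2)⁻¹ := by
    rw [Complex.conj_mul', norm_inv, ← Complex.ofReal_pow, ← Complex.ofReal_one,
      ← Complex.ofReal_sub, Complex.norm_real, Real.norm_of_nonneg (by nlinarith [norm_nonneg b])]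
  rw [hchain.deriv, norm_mul, hnorm, inv_mul_le_iff₀ (by nlinarith [norm_nonneg b]),
    mul_one_div, le_div_iff₀ hρ] at hschwarz
  linarith

theorem hasFPowerSeriesOnBall_ofScalars_of_hasSum {𝕜 : Type*} [DenselyNormedField 𝕜]
    {β : ℕ → 𝕜} {G : 𝕜 → 𝕜} {τ : ℝ} (hτ : 0 < τ)
    (hsum : ∀ w : 𝕜, ‖w‖ < τ → HasSum (fun j => β j * w ^ j) (G w)) :
    HasFPowerSeriesOnBall G (FormalMultilinearSeries.ofScalars 𝕜 β) 0 (ENNReal.ofReal τ) where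
  r_le := by
    refine ENNReal.le_of_forall_nnreal_lt fun r hr => ?_
    obtain ⟨x, hrx, hxτ⟩ := NormedField.exists_lt_norm_lt 𝕜 r.2
      ((ENNReal.lt_ofReal_iff_toReal_lt ENNReal.coe_ne_top).1 hr)
    refine le_trans ?_ (FormalMultilinearSeries.le_radius_of_tendsto _ (r := ‖x‖₊) (l := 0) ?_)
    · exact_mod_cast hrx.le
    · simpa [norm_mul, norm_pow] using (hsum x hxτ).summable.tendsto_atTop_zero.norm
  r_pos := ENNReal.ofReal_pos.2 hτ
  hasSum {y} hy := by
    rw [Metric.eball_ofReal, mem_ball_zero_iff] at hy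
    simpa [FormalMultilinearSeries.ofScalars_apply_eq, mul_comm] using hsum y hy

theorem norm_coeff_one_mul_le {β : ℕ → ℂ} {G : ℂ → ℂ} {τ : ℝ} (hτ : 0 < τ)
    (hsum : ∀ w : ℂ, ‖w‖ < τ → HasSum (fun j => β j * w ^ j) (G w))
    (hbd : ∀ w : ℂ, ‖w‖ < τ → ‖G w‖ ≤ 1) : ‖β 1‖ * τ ≤ 1 - ‖β 0‖ ^ 2 := by
  have hG := hasFPowerSeriesOnBall_ofScalars_of_hasSum hτ hsum
  have hG0 : G 0 = β 0 := (hsum 0 (by simpa using hτ)).unique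
    (hasSum_single 0 fun j hj => by simp [hj]) |>.trans (by simp)
  have hderiv : deriv G 0 = β 1 := by
    simp [hG.hasFPowerSeriesAt.deriv]
  have hd : DifferentiableOn ℂ G (ball 0 τ) := by
    rw [← Metric.eball_ofReal]
    exact hG.differentiableOn
  have := norm_deriv_mul_le_one_sub_sq hd (fun w hw => by simpa using hbd w (by simpa using hw)) hτ
  rwa [hderiv, hG0] at this

theorem IsPrimitiveRoot.geom_sum_pow_eq_ite {R : Type*} [CommRing R] [IsDomain R] {ζ : R} {s : ℕ}
    (hζ : IsPrimitiveRoot ζ s) (m : ℕ) :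
    ∑ k ∈ range s, (ζ ^ m) ^ k = if s ∣ m then (s : R) else 0 := by
  split_ifs with h
  · obtain ⟨j, rfl⟩ := h
    simp [pow_mul, hζ.pow_eq_one]
  · have hne : ζ ^ m - 1 ≠ 0 := sub_ne_zero.2 (mt (hζ.pow_eq_one_iff_dvd m).1 h)
    refine eq_zero_of_ne_zero_of_mul_left_eq_zero hne ?_
    rw [mul_geom_sum, ← pow_mul, mul_comm, pow_mul, hζ.pow_eq_one, one_pow, sub_self]

theorem hasSum_coeff_mul_pow_of_isPrimitiveRoot {b : ℕ → ℂ} {g : ℂ → ℂ} {ζ c : ℂ} {s : ℕ}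
    (hζ : IsPrimitiveRoot ζ s) (hs : s ≠ 0)
    (hsum : ∀ k, HasSum (fun m => b m * (ζ ^ k * c) ^ m) (g (ζ ^ k * c))) :
    HasSum (fun j => b (j * s) * (c ^ s) ^ j) ((s : ℂ)⁻¹ * ∑ k ∈ range s, g (ζ ^ k * c)) := by
  have hterm : ∀ m, ∑ k ∈ range s, b m * (ζ ^ k * c) ^ m
      = (if s ∣ m then (s : ℂ) else 0) * (b m * c ^ m) := fun m => by
    rw [← hζ.geom_sum_pow_eq_ite m, sum_mul]
    exact sum_congr rfl fun k _ => by ring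
  have h := hasSum_sum fun k (_ : k ∈ range s) => hsum k
  simp only [hterm] at h
  have hmult := ((mul_left_injective₀ hs).hasSum_iff fun m hm => by
    rw [if_neg fun ⟨j, hj⟩ => hm ⟨j, by simp [hj, mul_comm]⟩, zero_mul]).2 h
  have hcast : (s : ℂ) ≠ 0 := Nat.cast_ne_zero.2 hs
  simpa [← pow_mul, mul_comm s, hcast] using hmult.mul_left (s : ℂ)⁻¹

theorem norm_coeff_mul_pow_le {b : ℕ → ℂ} {g : ℂ → ℂ} {ρ : ℝ} (hρ : 0 < ρ)
    (hsum : ∀ c : ℂ, ‖c‖ < ρ → HasSum (fun m => b m * c ^ m) (g c))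
    (hbd : ∀ c : ℂ, ‖c‖ < ρ → ‖g c‖ ≤ 1) {s : ℕ} (hs : s ≠ 0) :
    ‖b s‖ * ρ ^ s ≤ 1 - ‖b 0‖ ^ 2 := by
  -- Averaging over the `s`-th roots of unity keeps the coefficients `b (j * s)`; as a function
  -- of `c ^ s` this is again a bounded power series, with first coefficient `b s`.
  have hζ := Complex.isPrimitiveRoot_exp s hs
  set ζ := Complex.exp (2 * Real.pi * Complex.I / s)
  have hnorm : ∀ k c, ‖ζ ^ k * c‖ = ‖c‖ := by simp [hζ.norm'_eq_one hs]
  choose root hroot using fun w : ℂ => IsAlgClosed.exists_pow_nat_eq w (Nat.pos_of_ne_zero hs)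
  have hroot_lt : ∀ w : ℂ, ‖w‖ < ρ ^ s → ‖root w‖ < ρ := fun w hw => by
    rw [← hroot w, norm_pow] at hw
    exact (pow_lt_pow_iff_left₀ (norm_nonneg _) hρ.le hs).1 hw
  have hmean : ∀ w : ℂ, ‖w‖ < ρ ^ s → ‖(s : ℂ)⁻¹ * ∑ k ∈ range s, g (ζ ^ k * root w)‖ ≤ 1 := by
    intro w hw
    rw [norm_mul, norm_inv, Complex.norm_natCast, inv_mul_le_iff₀ (by positivity)]
    refine (norm_sum_le _ _).trans ?_
    simpa using sum_le_sum fun k (_ : k ∈ range s) => hbd _ ((hnorm k _).trans_lt (hroot_lt w hw))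
  have := norm_coeff_one_mul_le (β := fun j => b (j * s)) (pow_pos hρ s) (fun w hw => by
    simpa [hroot] using hasSum_coeff_mul_pow_of_isPrimitiveRoot hζ hs
      fun k => hsum _ ((hnorm k _).trans_lt (hroot_lt w hw))) hmean
  simpa using this

section Homogeneous

variable {X ι : Type*} [NormedAddCommGroup X] [NormedSpace ℂ X]
  {F : X → ι → ℂ} {a : ι → ℂ} {P : ℕ → X → ι → ℂ}

theorem homogeneous_apply_zero
    (hhom : ∀ s : ℕ, 1 ≤ s → ∀ (c : ℂ) (z : X), P s (c • z) = c ^ s • P s z)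
    {s : ℕ} (hs : 1 ≤ s) : P s 0 = 0 := by
  simpa [zero_pow (by omega : s ≠ 0)] using hhom s hs 0 0

theorem apply_zero_eq_of_hasSum_homogeneous
    (hexp : ∀ z ∈ ball (0 : X) 1, HasSum (fun s : ℕ => P (s + 1) z) (F z - a))
    (hhom : ∀ s : ℕ, 1 ≤ s → ∀ (c : ℂ) (z : X), P s (c • z) = c ^ s • P s z) : F 0 = a := by
  have h0 := hexp 0 (mem_ball_self one_pos)
  rw [show (fun s : ℕ => P (s + 1) (0 : X)) = 0 from
    funext fun s => homogeneous_apply_zero hhom (by omega)] at h0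
  exact sub_eq_zero.1 (h0.unique hasSum_zero)

theorem hasSum_homogeneous_slice
    (hexp : ∀ z ∈ ball (0 : X) 1, HasSum (fun s : ℕ => P (s + 1) z) (F z - a))
    (hhom : ∀ s : ℕ, 1 ≤ s → ∀ (c : ℂ) (z : X), P s (c • z) = c ^ s • P s z)
    {z : X} {c : ℂ} (hc : ‖c‖ * ‖z‖ < 1) (j : ι) :
    HasSum (fun m => (if m = 0 then a j else P m z j) * c ^ m) (F (c • z) j) := by
  have h := Pi.hasSum.1 (hexp (c • z) (by rwa [mem_ball_zero_iff, norm_smul])) j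
  rw [← hasSum_nat_add_iff' 1]
  simpa [hhom _ (Nat.le_add_left 1 _) c z, mul_comm] using h

variable [Fintype ι]

theorem norm_le_one_of_hasSum_homogeneous
    (hexp : ∀ z ∈ ball (0 : X) 1, HasSum (fun s : ℕ => P (s + 1) z) (F z - a))
    (hhom : ∀ s : ℕ, 1 ≤ s → ∀ (c : ℂ) (z : X), P s (c • z) = c ^ s • P s z)
    (hbd : ∀ z ∈ ball (0 : X) 1, ‖F z‖ ≤ 1) : ‖a‖ ≤ 1 :=
  apply_zero_eq_of_hasSum_homogeneous hexp hhom ▸ hbd 0 (mem_ball_self one_pos)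

theorem norm_homogeneous_apply_le
    (hexp : ∀ z ∈ ball (0 : X) 1, HasSum (fun s : ℕ => P (s + 1) z) (F z - a))
    (hhom : ∀ s : ℕ, 1 ≤ s → ∀ (c : ℂ) (z : X), P s (c • z) = c ^ s • P s z)
    (hbd : ∀ z ∈ ball (0 : X) 1, ‖F z‖ ≤ 1) {s : ℕ} (hs : 1 ≤ s) (z : X) (j : ι) :
    ‖P s z j‖ ≤ (1 - ‖a j‖ ^ 2) * ‖z‖ ^ s := by
  rcases eq_or_ne z 0 with rfl | hz
  · simp [homogeneous_apply_zero hhom hs, zero_pow (by omega : s ≠ 0)]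
  have hz' : 0 < ‖z‖ := norm_pos_iff.2 hz
  have hslice : ∀ c : ℂ, ‖c‖ < ‖z‖⁻¹ → ‖c‖ * ‖z‖ < 1 := fun c hc => by
    rwa [← lt_div_iff₀ hz', one_div]
  have h := norm_coeff_mul_pow_le (inv_pos.2 hz')
    (fun c hc => hasSum_homogeneous_slice hexp hhom (hslice c hc) j)
    (fun c hc => (norm_le_pi_norm _ j).trans
      (hbd _ (by rw [mem_ball_zero_iff, norm_smul]; exact hslice c hc))) (by omega : s ≠ 0)
  rwa [if_neg (by omega), if_pos rfl, inv_pow, ← div_eq_mul_inv,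
    div_le_iff₀ (by positivity)] at h

theorem norm_homogeneous_le
    (hexp : ∀ z ∈ ball (0 : X) 1, HasSum (fun s : ℕ => P (s + 1) z) (F z - a))
    (hhom : ∀ s : ℕ, 1 ≤ s → ∀ (c : ℂ) (z : X), P s (c • z) = c ^ s • P s z)
    (hbd : ∀ z ∈ ball (0 : X) 1, ‖F z‖ ≤ 1) (ha : ∀ j, ‖a j‖ = ‖a‖) {s : ℕ} (hs : 1 ≤ s)
    (z : X) : ‖P s z‖ ≤ (1 - ‖a‖ ^ 2) * ‖z‖ ^ s := by
  have hA := norm_le_one_of_hasSum_homogeneous hexp hhom hbd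
  refine (pi_norm_le_iff_of_nonneg ?_).2 fun j =>
    ha j ▸ norm_homogeneous_apply_le hexp hhom hbd hs z j
  exact mul_nonneg (by nlinarith [norm_nonneg a]) (by positivity)

end Homogeneous

section LogSeries

open Real

variable {x : ℝ}

theorem hasSum_pow_div_succ (hx0 : x ≠ 0) (hx : |x| < 1) :
    HasSum (fun m : ℕ => x ^ m / (m + 1)) (log (1 / (1 - x)) / x) := by
  rw [one_div, log_inv]
  have h := (hasSum_pow_div_log_of_abs_lt_one hx).div_const x
  rwa [show (fun m : ℕ => x ^ (m + 1) / (m + 1) / x) = fun m : ℕ => x ^ m / (m + 1) from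
    funext fun m => by rw [pow_succ]; field_simp] at h

theorem hasSum_pow_succ_div_add_two (hx0 : x ≠ 0) (hx : |x| < 1) :
    HasSum (fun m : ℕ => x ^ (m + 1) / (m + 2)) (log (1 / (1 - x)) / x - 1) := by
  simpa [add_assoc, one_add_one_eq_two] using (hasSum_nat_add_iff' 1).2 (hasSum_pow_div_succ hx0 hx)

theorem hasSum_pow_succ_div_succ_mul_add_two (hx0 : x ≠ 0) (hx : |x| < 1) :
    HasSum (fun m : ℕ => x ^ (m + 1) / ((m + 1) * (m + 2)))
      (1 - (1 - x) * log (1 / (1 - x)) / x) := by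
  have h := (hasSum_pow_div_log_of_abs_lt_one hx).sub (hasSum_pow_succ_div_add_two hx0 hx)
  have h1x : 1 - x ≠ 0 := by linarith [abs_lt.1 hx]
  rw [one_div, log_inv] at h ⊢
  rw [show 1 - (1 - x) * -log (1 - x) / x = -log (1 - x) - (-log (1 - x) / x - 1) by
    field_simp; ring]
  rwa [show (fun m : ℕ => x ^ (m + 1) / (m + 1) - x ^ (m + 1) / (m + 2))
      = fun m : ℕ => x ^ (m + 1) / ((m + 1) * (m + 2)) from
    funext fun m => by field_simp; ring] at h

theorem antitoneOn_one_sub_mul_log_div :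
    AntitoneOn (fun x : ℝ => (1 - x) * log (1 / (1 - x)) / x) (Set.Ioo 0 1) := by
  intro x hx y hy hxy
  have habs : ∀ t ∈ Set.Ioo (0 : ℝ) 1, |t| < 1 := fun t ht => abs_lt.2 ⟨by linarith [ht.1], ht.2⟩
  have := hasSum_le (fun m => by gcongr; exact hx.1.le)
    (hasSum_pow_succ_div_succ_mul_add_two hx.1.ne' (habs x hx))
    (hasSum_pow_succ_div_succ_mul_add_two hy.1.ne' (habs y hy))
  dsimp only
  linarith

theorem two_mul_le_three_mul_one_sub_mul_log {R r : ℝ} (hR : R ∈ Set.Ioo 0 1)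
    (hroot : 3 * (1 - R) * log (1 / (1 - R)) = 2 * R) (hr : 0 < r) (hrR : r ≤ R) :
    2 * r ≤ 3 * ((1 - r) * log (1 / (1 - r))) := by
  have h := antitoneOn_one_sub_mul_log_div ⟨hr, hrR.trans_lt hR.2⟩ hR hrR
  have hR' : (1 - R) * log (1 / (1 - R)) / R = 2 / 3 := by
    rw [div_eq_iff hR.1.ne']
    linarith
  dsimp only at h
  rw [hR', le_div_iff₀ hr] at h
  linarith

theorem tsum_cesaro_le {p : ℕ → ℝ} {C r : ℝ} (hp0 : ∀ s, 0 ≤ p s)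
    (hp : ∀ s, 1 ≤ s → p s ≤ C * r ^ s) (hr0 : 0 < r) (hr1 : r < 1) :
    ∑' m : ℕ, (1 / (m + 2 : ℝ)) * ∑ k ∈ range (m + 1), r ^ k * p (m + 1 - k)
      ≤ C * (r / (1 - r) - (log (1 / (1 - r)) / r - 1)) := by
  have hterm : ∀ m : ℕ, (1 / (m + 2 : ℝ)) * ∑ k ∈ range (m + 1), r ^ k * p (m + 1 - k)
      ≤ C * (r ^ (m + 1) - r ^ (m + 1) / (m + 2)) := fun m => by
    have hsum : ∑ k ∈ range (m + 1), r ^ k * p (m + 1 - k)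
        ≤ ∑ _k ∈ range (m + 1), C * r ^ (m + 1) := sum_le_sum fun k hk => by
      have hk : k < m + 1 := mem_range.1 hk
      calc r ^ k * p (m + 1 - k) ≤ r ^ k * (C * r ^ (m + 1 - k)) :=
            mul_le_mul_of_nonneg_left (hp _ (by omega)) (by positivity)
        _ = C * r ^ (m + 1) := by rw [mul_left_comm, ← pow_add, Nat.add_sub_cancel' hk.le]
    rw [sum_const, card_range, nsmul_eq_mul] at hsum
    calc _ ≤ (1 / (m + 2 : ℝ)) * ((m + 1 : ℕ) * (C * r ^ (m + 1))) := by gcongr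
      _ = _ := by push_cast; field_simp; ring
  have hgeom : HasSum (fun m : ℕ => r ^ (m + 1)) (r / (1 - r)) := by
    simpa [pow_succ', div_eq_mul_inv] using (hasSum_geometric_of_lt_one hr0.le hr1).mul_left r
  have hmaj := (hgeom.sub (hasSum_pow_succ_div_add_two hr0.ne'
    (abs_lt.2 ⟨by linarith, hr1⟩))).mul_left C
  have hnonneg : ∀ m : ℕ, 0 ≤ (1 / (m + 2 : ℝ)) * ∑ k ∈ range (m + 1), r ^ k * p (m + 1 - k) :=
    fun m => mul_nonneg (by positivity) (sum_nonneg fun k _ => mul_nonneg (by positivity) (hp0 _))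
  exact hasSum_le hterm (Summable.of_nonneg_of_le hnonneg hterm hmaj.summable).hasSum hmaj

theorem bohr_majorant_le {A r L : ℝ} (hA0 : 0 ≤ A) (hA1 : A ≤ 1) (hr0 : 0 < r) (hr1 : r < 1)
    (hkey : 2 * r ≤ 3 * ((1 - r) * L)) :
    A * (L / r) + (1 - A ^ 2) * (r / (1 - r) - (L / r - 1)) ≤ 1 / r * L := by
  have hfactor : 1 / r * L - (A * (L / r) + (1 - A ^ 2) * (r / (1 - r) - (L / r - 1)))
      = (1 - A) * ((1 - r) * L - (1 + A) * (r - (1 - r) * L)) / (r * (1 - r)) := by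
    field_simp [(by linarith : 1 - r ≠ 0)]
    ring
  have hpos : 0 ≤ (1 - A) * ((1 - r) * L - (1 + A) * (r - (1 - r) * L)) :=
    mul_nonneg (by linarith) (by nlinarith)
  have := div_nonneg hpos (mul_pos hr0 (by linarith : (0 : ℝ) < 1 - r)).le
  linarith

end LogSeries

theorem stmt_15_general {X : Type*} [NormedAddCommGroup X] [NormedSpace ℂ X]
    (n : ℕ) (F : X → (Fin n → ℂ)) (a : Fin n → ℂ) (P : ℕ → X → (Fin n → ℂ))
    (hexp : ∀ z ∈ ball (0 : X) 1, HasSum (fun s : ℕ => P (s + 1) z) (F z - a))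
    (hhom : ∀ s : ℕ, 1 ≤ s → ∀ (c : ℂ) (z : X), P s (c • z) = c ^ s • P s z)
    (hbd : ∀ z ∈ ball (0 : X) 1, ‖F z‖ ≤ 1)
    (ha : ∀ j : Fin n, ‖a j‖ = ‖a‖)
    (R : ℝ) (hR : R ∈ Set.Ioo (0 : ℝ) 1)
    (hroot : 3 * (1 - R) * Real.log (1 / (1 - R)) = 2 * R) :
    ∀ (z : X) (r : ℝ), ‖z‖ = r → 0 < r → r ≤ R →
      (∑' m : ℕ, ‖a‖ * r ^ m / (m + 1))
        + ∑' m : ℕ, (1 / (m + 2 : ℝ)) * ∑ k ∈ range (m + 1), r ^ k * ‖P (m + 1 - k) z‖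
      ≤ (1 / r) * Real.log (1 / (1 - r)) := by
  intro z r hz hr hrR
  have hr1 : r < 1 := hrR.trans_lt hR.2
  have hfirst : ∑' m : ℕ, ‖a‖ * r ^ m / (m + 1) = ‖a‖ * (Real.log (1 / (1 - r)) / r) := by
    simp_rw [mul_div_assoc]
    exact ((hasSum_pow_div_succ hr.ne' (abs_lt.2 ⟨by linarith, hr1⟩)).mul_left _).tsum_eq
  have hP : ∀ s, 1 ≤ s → ‖P s z‖ ≤ (1 - ‖a‖ ^ 2) * r ^ s := fun s hs =>
    hz ▸ norm_homogeneous_le hexp hhom hbd ha hs z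
  rw [hfirst]
  calc _ ≤ ‖a‖ * (Real.log (1 / (1 - r)) / r)
        + (1 - ‖a‖ ^ 2) * (r / (1 - r) - (Real.log (1 / (1 - r)) / r - 1)) :=
        add_le_add_right (tsum_cesaro_le (fun _ => norm_nonneg _) hP hr hr1) _
    _ ≤ _ := bohr_majorant_le (norm_nonneg a) (norm_le_one_of_hasSum_homogeneous hexp hhom hbd)
        hr hr1 (two_mul_le_three_mul_one_sub_mul_log hR hroot hr hrR)

theorem stmt_15 {X : Type*} [NormedAddCommGroup X] [NormedSpace ℂ X] [CompleteSpace X]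
    (n : ℕ) (F : X → (Fin n → ℂ)) (a : Fin n → ℂ) (P : ℕ → X → (Fin n → ℂ))
    (hF : DifferentiableOn ℂ F (ball (0 : X) 1))
    (hexp : ∀ z ∈ ball (0 : X) 1, HasSum (fun s : ℕ => P (s + 1) z) (F z - a))
    (hhom : ∀ s : ℕ, 1 ≤ s → ∀ (c : ℂ) (z : X), P s (c • z) = c ^ s • P s z)
    (hbd : ∀ z ∈ ball (0 : X) 1, ‖F z‖ ≤ 1)
    (ha : ∀ j : Fin n, ‖a j‖ = ‖a‖)
    (R : ℝ) (hR : R ∈ Set.Ioo (0 : ℝ) 1)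
    (hroot : 3 * (1 - R) * Real.log (1 / (1 - R)) = 2 * R) :
    ∀ (z : X) (r : ℝ), ‖z‖ = r → 0 < r → r ≤ R →
      (∑' m : ℕ, ‖a‖ * r ^ m / (m + 1))
        + ∑' m : ℕ, (1 / (m + 2 : ℝ)) * ∑ k ∈ range (m + 1), r ^ k * ‖P (m + 1 - k) z‖
      ≤ (1 / r) * Real.log (1 / (1 - r)) :=
  stmt_15_general n F a P hexp hhom hbd ha R hR hroot
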